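/- For the Shuffle task with n even and all blocks of size 2 (T = n/2 steps, 2 tokens per step), the lower bound equals L_{n/2} = log₂(n!!/(n-1)!!), and this quantity tends to infinity as n → ∞. -/

import Mathlib

open Finset Filter

noncomputable def H2 {β : Type*} [Fintype β] (p : β → ℝ) : ℝ :=
  -∑ b, p b * Real.logb 2 (p b)

noncomputable def KL2 {β : Type*} [Fintype β] (p q : β → ℝ) : ℝ :=
  ∑ b, p b * Real.logb 2 (p b / q b)

def IsPMF {β : Type*} [Fintype β] (p : β → ℝ) : Prop :=
  (∀ b, 0 ≤ p b) ∧ ∑ b, p b = 1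

noncomputable def entOf {Ω γ : Type*} [Fintype Ω] [Fintype γ] [DecidableEq γ]
    (p : Ω → ℝ) (f : Ω → γ) : ℝ :=
  H2 (fun g => ∑ ω, if f ω = g then p ω else 0)

noncomputable def Cof {Ω ι β γ : Type*}
    [Fintype Ω] [Fintype ι] [DecidableEq ι] [Fintype β] [DecidableEq β]
    [Fintype γ] [DecidableEq γ]
    (p : Ω → ℝ) (f : ι → Ω → β) (g : Ω → γ) : ℝ :=
  (∑ i, (entOf p (fun ω => (f i ω, g ω)) - entOf p g))
    - (entOf p (fun ω => ((fun i => f i ω), g ω)) - entOf p g)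

/-!
Under a uniformly random permutation `σ` of `N` positions, the tokens `x ∘ σ` seen at a set
`s` of positions determine `σ` on `s`, and each restriction is shared by `(N-|s|)!`
permutations, so their entropy is `log₂ (N!/(N-|s|)!) = log₂ (N (N-1) ⋯ (N-|s|+1))`.
Conditioned on the `m` tokens already seen, each token of a block of size `k` is uniform over
`N - m` values while the block is a uniform injection, so the step contributes
`k log₂ (N - m) - log₂ ((N-m)(N-m-1)⋯(N-m-k+1))`. For blocks of size `2` this is
`log₂ ((N-2t)/(N-2t-1))`, and the product over `t` telescopes to `n‼/(n-1)‼`.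
Divergence follows from `((2m)‼/(2m-1)‼)² ≥ 2m+1`.
-/

open Equiv Function
open scoped Nat

section Entropy

variable {Ω γ : Type*} [Fintype Ω] [Fintype γ] [DecidableEq γ]

theorem entOf_eq_neg_sum (p : Ω → ℝ) (f : Ω → γ) :
    entOf p f = -∑ ω, p ω * Real.logb 2 (∑ ω', if f ω' = f ω then p ω' else 0) := by
  unfold entOf H2
  simp only [sum_mul, ite_mul, zero_mul]
  rw [sum_comm]
  simp only [sum_ite_eq, mem_univ, if_true]

theorem entOf_uniform_of_card_fiber [Nonempty Ω] (f : Ω → γ) (c : ℕ)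
    (hfib : ∀ ω, #{ω' | f ω' = f ω} = c) :
    entOf (fun _ => ((Fintype.card Ω : ℝ))⁻¹) f = Real.logb 2 (Fintype.card Ω / c) := by
  have hmass : ∀ ω, (∑ ω', if f ω' = f ω then ((Fintype.card Ω : ℝ))⁻¹ else 0)
      = c / Fintype.card Ω := by
    intro ω
    rw [← sum_filter, sum_const, hfib, nsmul_eq_mul, div_eq_mul_inv]
  simp only [entOf_eq_neg_sum, hmass]
  rw [sum_const, card_univ, nsmul_eq_mul, ← mul_assoc, mul_inv_cancel₀ (by positivity), one_mul,
    ← Real.logb_inv, inv_div]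

end Entropy

section Permutations

variable {α : Type*} [Fintype α] [DecidableEq α]

theorem card_perm_eqOn (s : Finset α) (σ₀ : Perm α) :
    #{σ : Perm α | ∀ a ∈ s, σ a = σ₀ a} = (Fintype.card α - #s)! := by
  rw [← Fintype.card_subtype]
  have e : {σ : Perm α // ∀ a ∈ s, σ a = σ₀ a} ≃ Perm {a // a ∉ s} :=
    calc {σ : Perm α // ∀ a ∈ s, σ a = σ₀ a}
        ≃ {π : Perm α // ∀ a, ¬a ∉ s → π a = a} :=
          (Equiv.mulLeft σ₀⁻¹).subtypeEquiv fun σ => by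
            simp only [not_not, Equiv.coe_mulLeft, Perm.mul_apply, Perm.inv_eq_iff_eq]
      _ ≃ Perm {a // a ∉ s} := (Perm.subtypeEquivSubtypePerm _).symm
  rw [Fintype.card_congr e, Fintype.card_perm, Fintype.card_subtype_compl, Fintype.card_coe]

variable {γ : Type*} [Fintype γ] [DecidableEq γ]

theorem entOf_perm_of_eq_iff (s : Finset α) (f : Perm α → γ)
    (hf : ∀ σ τ, f σ = f τ ↔ ∀ a ∈ s, σ a = τ a) :
    entOf (fun _ => (((Fintype.card α)! : ℝ))⁻¹) f
      = Real.logb 2 ((Fintype.card α).descFactorial #s) := by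
  have h := entOf_uniform_of_card_fiber f _ fun σ₀ =>
    (congrArg card (filter_congr fun σ _ => hf σ σ₀)).trans (card_perm_eqOn s σ₀)
  rw [Fintype.card_perm] at h
  rw [h, ← Nat.factorial_mul_descFactorial (card_le_univ s), Nat.cast_mul,
    mul_div_cancel_left₀ _ (by positivity)]

end Permutations

theorem logb_descFactorial_add_sub {N m k : ℕ} (h : m + k ≤ N) :
    Real.logb 2 (N.descFactorial (m + k)) - Real.logb 2 (N.descFactorial m)
      = Real.logb 2 ((N - m).descFactorial k) := by
  have hprod := Nat.descFactorial_mul_descFactorial (n := N) (Nat.le_add_right m k)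
  rw [Nat.add_sub_cancel_left] at hprod
  have h₁ : 0 < (N - m).descFactorial k := Nat.descFactorial_pos.mpr (by omega)
  have h₂ : 0 < N.descFactorial m := Nat.descFactorial_pos.mpr (by omega)
  rw [← hprod, Nat.cast_mul, Real.logb_mul (by positivity) (by positivity), add_sub_cancel_right]

theorem comp_subtype_eq_iff {α β : Type*} {x : α → β} (hx : Injective x) (P : α → Prop)
    (σ τ : α → α) :
    (fun j : {a // P a} => x (σ j)) = (fun j : {a // P a} => x (τ j)) ↔
      ∀ a, P a → σ a = τ a := by
  simp only [funext_iff, hx.eq_iff, Subtype.forall]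

theorem card_filter_lt_of_card_fiber {α : Type*} [Fintype α] {T k : ℕ} {blk : α → Fin T}
    (h : ∀ t, #{a | blk a = t} = k) (t : Fin T) : #{a | blk a < t} = k * t := by
  rw [card_eq_sum_card_fiberwise (f := blk) (t := Iio t) fun a ha => by simpa using ha,
    sum_congr rfl fun t' ht' => ?_, sum_const, Fin.card_Iio, smul_eq_mul, mul_comm]
  rw [filter_filter, ← h t']
  congr 1
  ext a
  simp only [mem_filter, mem_univ, true_and, and_iff_right_iff_imp]
  rintro rfl
  simpa using ht'

theorem card_eq_mul_of_card_fiber {α : Type*} [Fintype α] {T k : ℕ} {blk : α → Fin T}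
    (h : ∀ t, #{a | blk a = t} = k) : Fintype.card α = k * T := by
  rw [← card_univ, card_eq_sum_card_fiberwise (f := blk) (t := univ) fun a _ => mem_univ _,
    sum_congr rfl fun t _ => h t, sum_const, card_univ, Fintype.card_fin, smul_eq_mul, mul_comm]

section Blocks

variable {α β : Type*} [Fintype α] [DecidableEq α] [Fintype β] [DecidableEq β]

theorem cof_perm_block {x : α → β} (hx : Injective x) (B P : α → Prop) [DecidablePred B]
    [DecidablePred P] (hBP : ∀ a, B a → ¬P a) :
    Cof (fun _ : Perm α => (((Fintype.card α)! : ℝ))⁻¹)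
        (fun j : {a // B a} => fun σ => x (σ j)) (fun σ => fun j : {a // P a} => x (σ j))
      = Fintype.card {a // B a} * Real.logb 2 (Fintype.card α - Fintype.card {a // P a} : ℕ)
        - Real.logb 2 ((Fintype.card α - Fintype.card {a // P a}).descFactorial
            (Fintype.card {a // B a})) := by
  set N := Fintype.card α
  set m := Fintype.card {a // P a}
  set k := Fintype.card {a // B a}
  have hm : #{a | P a} = m := (Fintype.card_subtype P).symm
  have hcond : entOf (fun _ : Perm α => ((N ! : ℝ))⁻¹) (fun σ j => x (σ (j : {a // P a})))
      = Real.logb 2 (N.descFactorial m) := by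
    rw [← hm]
    exact entOf_perm_of_eq_iff _ _ fun σ τ => by simp [comp_subtype_eq_iff hx]
  have hpair : ∀ i : {a // B a}, entOf (fun _ : Perm α => ((N ! : ℝ))⁻¹)
        (fun σ => (x (σ i), fun j : {a // P a} => x (σ j)))
        - entOf (fun _ : Perm α => ((N ! : ℝ))⁻¹) (fun σ j => x (σ (j : {a // P a})))
      = Real.logb 2 (N - m : ℕ) := by
    intro i
    have hi : (i : α) ∉ ({a | P a} : Finset α) := by simpa using hBP i i.2
    have hcard : #(insert (i : α) ({a | P a} : Finset α)) = m + 1 := by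
      rw [card_insert_of_notMem hi, hm]
    rw [hcond, ← Nat.descFactorial_one (N - m), ← logb_descFactorial_add_sub
      (hcard ▸ card_le_univ _), ← hcard]
    congr 1
    exact entOf_perm_of_eq_iff _ _ fun σ τ => by
      simp [Prod.ext_iff, hx.eq_iff, comp_subtype_eq_iff hx]
  have hcard : #{a | B a ∨ P a} = m + k := by
    rw [filter_or, card_union_of_disjoint (disjoint_filter.mpr fun a _ => hBP a), add_comm, hm,
      ← Fintype.card_subtype]
  have hjoint : entOf (fun _ : Perm α => ((N ! : ℝ))⁻¹)
        (fun σ => ((fun i : {a // B a} => x (σ i)), fun j : {a // P a} => x (σ j)))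
      = Real.logb 2 (N.descFactorial (m + k)) := by
    rw [← hcard]
    exact entOf_perm_of_eq_iff _ _ fun σ τ => by
      simp [Prod.ext_iff, comp_subtype_eq_iff hx, or_imp, forall_and]
  have hmk : m + k ≤ N := hcard ▸ card_le_univ _
  unfold Cof
  rw [sum_congr rfl fun i _ => hpair i, hjoint, hcond, logb_descFactorial_add_sub hmk, sum_const,
    card_univ, nsmul_eq_mul]

theorem cof_perm_pair_block {x : α → β} (hx : Injective x) {T : ℕ} {blk : α → Fin T}
    (hblk : ∀ t, #{a | blk a = t} = 2) (t : Fin T) :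
    Cof (fun _ : Perm α => (((Fintype.card α)! : ℝ))⁻¹)
        (fun j : {a // blk a = t} => fun σ => x (σ j))
        (fun σ => fun j : {a // blk a < t} => x (σ j))
      = Real.logb 2 (2 * T - 2 * t : ℕ) - Real.logb 2 (2 * T - 1 - 2 * t : ℕ) := by
  rw [cof_perm_block hx (fun a => blk a = t) (fun a => blk a < t) fun a ha => ha.not_lt]
  simp only [Fintype.card_subtype, hblk, card_filter_lt_of_card_fiber hblk,
    card_eq_mul_of_card_fiber hblk]
  have ht := t.isLt
  rw [Nat.descFactorial_succ, Nat.descFactorial_one,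
    show 2 * T - 2 * t - 1 = 2 * T - 1 - 2 * t by omega, Nat.cast_mul,
    Real.logb_mul (Nat.cast_ne_zero.mpr (by omega)) (Nat.cast_ne_zero.mpr (by omega))]
  push_cast
  ring

end Blocks

theorem prod_fin_sub_two_mul {n T : ℕ} (h₁ : n ≤ 2 * T) (h₂ : 2 * T ≤ n + 1) :
    ∏ t : Fin T, (n - 2 * t) = n‼ := by
  induction T generalizing n with
  | zero =>
    obtain rfl | rfl : n = 0 ∨ n = 1 := by omega
    all_goals rfl
  | succ T ih =>
    obtain ⟨n, rfl⟩ : ∃ n', n = n' + 1 := ⟨n - 1, by omega⟩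
    rw [Fin.prod_univ_succ, Nat.doubleFactorial_add_one, ← ih (n := n - 1) (by omega) (by omega)]
    simp only [Fin.val_zero, Fin.val_succ]
    congr 1
    exact prod_congr rfl fun t _ => by omega

theorem sum_logb_sub_eq_logb_doubleFactorial_div (T : ℕ) :
    ∑ t : Fin T, (Real.logb 2 (2 * T - 2 * t : ℕ) - Real.logb 2 (2 * T - 1 - 2 * t : ℕ))
      = Real.logb 2 ((2 * T)‼ / (2 * T - 1)‼ : ℝ) := by
  rw [sum_sub_distrib,
    ← Real.logb_prod _ _ fun t _ => Nat.cast_ne_zero.mpr (by have := t.isLt; omega),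
    ← Real.logb_prod _ _ fun t _ => Nat.cast_ne_zero.mpr (by have := t.isLt; omega),
    ← Nat.cast_prod, ← Nat.cast_prod, prod_fin_sub_two_mul le_rfl (by omega),
    prod_fin_sub_two_mul (by omega) (by omega), Real.logb_div (by positivity) (by positivity)]

theorem sq_doubleFactorial_odd_le (m : ℕ) :
    (2 * m + 1) * ((2 * m - 1)‼) ^ 2 ≤ ((2 * m)‼) ^ 2 := by
  induction m with
  | zero => rfl
  | succ m ih =>
    rw [show 2 * (m + 1) = 2 * m + 2 by ring, show 2 * m + 2 - 1 = 2 * m + 1 by omega,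
      Nat.doubleFactorial_add_two, Nat.doubleFactorial_add_one]
    nlinarith [Nat.mul_le_mul_left ((2 * m + 3) * (2 * m + 1)) ih]

theorem tendsto_doubleFactorial_div :
    Tendsto (fun m : ℕ => ((2 * m)‼ : ℝ) / (2 * m - 1)‼) atTop atTop := by
  refine tendsto_atTop_mono (fun m => ?_)
    (Real.tendsto_sqrt_atTop.comp tendsto_natCast_atTop_atTop)
  have hsq : ((2 * m + 1 : ℕ) : ℝ) * ((2 * m - 1)‼ : ℝ) ^ 2 ≤ ((2 * m)‼ : ℝ) ^ 2 := by
    exact_mod_cast sq_doubleFactorial_odd_le m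
  rw [comp_apply, Real.sqrt_le_left (by positivity), div_pow, le_div_iff₀ (by positivity)]
  refine le_trans ?_ hsq
  gcongr
  linarith

/-- For the Shuffle task with `n` even and all blocks of size `2`
(`T = n/2` steps, `2` tokens per step), the lower bound
`∑ t E[C(S_t | X, S_{<t})]` equals `L_{n/2} = log₂ (n‼ / (n-1)‼)`,
and this quantity tends to infinity as `n → ∞` (over even `n = 2m`). -/
theorem stmt_10 {β : Type*} [Fintype β] [DecidableEq β] :
    (∀ (n T : ℕ) (x : Fin n → β), Function.Injective x →
      ∀ blk : Fin n → Fin T, n = 2 * T →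
        (∀ t, (univ.filter fun j => blk j = t).card = 2) →
        (∑ t : Fin T, Cof (fun _ : Equiv.Perm (Fin n) => ((n.factorial : ℝ))⁻¹)
            (fun j : {j // blk j = t} => fun σ => x (σ j.1))
            (fun σ => fun j : {j // blk j < t} => x (σ j.1)))
          = Real.logb 2 ((Nat.doubleFactorial n : ℝ) / (Nat.doubleFactorial (n - 1) : ℝ)))
    ∧ Filter.Tendsto
        (fun m : ℕ => Real.logb 2
          ((Nat.doubleFactorial (2 * m) : ℝ) / (Nat.doubleFactorial (2 * m - 1) : ℝ)))
        Filter.atTop Filter.atTop := by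
  refine ⟨fun n T x hx blk hn hblk => ?_,
    (Real.tendsto_logb_atTop one_lt_two).comp tendsto_doubleFactorial_div⟩
  subst hn
  have hstep := cof_perm_pair_block hx hblk
  simp only [Fintype.card_fin] at hstep
  rw [sum_congr rfl fun t _ => hstep t, sum_logb_sub_eq_logb_doubleFactorial_div]
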